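/- Let k, r be positive integers with r ≥ 2 and gcd(k+1,r-1)=1, β = -(r-1)/(k+1). Suppose μ is a (k,r,n)-admissible partition and λ is obtained from μ by adding one node in row j (so λ_j = μ_j + 1), and λ is not (k,r,n)-admissible. Then j > k, μ_{j-k} = μ_j + r, and (k+1)·β + μ_{j-k} - μ_j - 1 = 0, i.e., the Pieri coefficient ψ'_{λ/μ} vanishes at β. -/

import Mathlib

/-!
Adding a node in row `j` can only break the admissibility inequality whose smaller side is
row `j`, i.e. the one between rows `j - k` and `j`; since `μ` satisfied it, it was tight:
`μ_{j-k} = μ_j + r`. The numerator factor of `ψ'_{λ/μ}` with `i = j - k` is then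
`(k + 1) β + r - 1`, which is exactly what `β = -(r - 1)/(k + 1)` kills.
-/

open Function

def IsAdmissible (k r n : ℕ) (μ : ℕ → ℕ) : Prop :=
  ∀ i, 1 ≤ i → i + k ≤ n → μ (i + k) + r ≤ μ i

/-- The Pieri coefficient `ψ'_{λ/μ}` for `λ` obtained from `μ` by adding a node in row `j`. -/
def pieriCoeff (β : ℚ) (μ : ℕ → ℕ) (j : ℕ) : ℚ :=
  ∏ i ∈ Finset.Icc 1 (j - 1),
    ((((j : ℚ) - (i : ℚ) - 1) * β + (μ i : ℚ) - (μ j : ℚ)) /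
      (((j : ℚ) - (i : ℚ)) * β + (μ i : ℚ) - (μ j : ℚ) - 1)) *
    ((((j : ℚ) - (i : ℚ) + 1) * β + (μ i : ℚ) - (μ j : ℚ) - 1) /
      (((j : ℚ) - (i : ℚ)) * β + (μ i : ℚ) - (μ j : ℚ)))

theorem IsAdmissible.tight_of_not_isAdmissible_update {k r n j : ℕ} {μ : ℕ → ℕ}
    (hk : 0 < k) (hadm : IsAdmissible k r n μ)
    (hnot : ¬ IsAdmissible k r n (update μ j (μ j + 1))) :
    k < j ∧ μ (j - k) = μ j + r := by
  simp only [IsAdmissible, not_forall, not_le] at hnot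
  obtain ⟨i, hi, hin, hviol⟩ := hnot
  have hμi := hadm i hi hin
  by_cases hij : i + k = j
  · subst hij
    rw [update_self, update_of_ne (by omega)] at hviol
    exact ⟨by omega, by rw [Nat.add_sub_cancel]; omega⟩
  · have : μ i ≤ update μ j (μ j + 1) i := by
      by_cases h : i = j
      · subst h; simp
      · rw [update_of_ne h]
    rw [update_of_ne hij] at hviol
    omega

theorem pieriCoeff_eq_zero_of_numerator_eq_zero {β : ℚ} {μ : ℕ → ℕ} {i j : ℕ}
    (hi : i ∈ Finset.Icc 1 (j - 1))
    (hnum : ((j : ℚ) - i + 1) * β + μ i - μ j - 1 = 0) :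
    pieriCoeff β μ j = 0 :=
  Finset.prod_eq_zero hi (by rw [hnum, zero_div, mul_zero])

theorem pieri_coefficient_vanishes_general (k r n : ℕ) (hk : 1 ≤ k)
    (β : ℚ) (hβ : β = -((r : ℚ) - 1) / ((k : ℚ) + 1))
    (μ : ℕ → ℕ)
    (hadm : ∀ i, 1 ≤ i → i + k ≤ n → μ (i + k) + r ≤ μ i)
    (j : ℕ)
    (lam : ℕ → ℕ) (hlam : ∀ m, lam m = if m = j then μ j + 1 else μ m)
    (hnot : ¬ (∀ i, 1 ≤ i → i + k ≤ n → lam (i + k) + r ≤ lam i)) :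
    k < j ∧ μ (j - k) = μ j + r ∧
    (((k : ℚ) + 1) * β + (μ (j - k) : ℚ) - (μ j : ℚ) - 1 = 0) ∧
    (∏ i ∈ Finset.Icc 1 (j - 1),
      ((((j : ℚ) - (i : ℚ) - 1) * β + (μ i : ℚ) - (μ j : ℚ)) /
        (((j : ℚ) - (i : ℚ)) * β + (μ i : ℚ) - (μ j : ℚ) - 1)) *
      ((((j : ℚ) - (i : ℚ) + 1) * β + (μ i : ℚ) - (μ j : ℚ) - 1) /
        (((j : ℚ) - (i : ℚ)) * β + (μ i : ℚ) - (μ j : ℚ)))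
      = 0) := by
  have hlam' : lam = update μ j (μ j + 1) := funext fun m => by
    rw [hlam, update_apply]
  subst hlam'
  obtain ⟨hkj, htight⟩ := IsAdmissible.tight_of_not_isAdmissible_update hk hadm hnot
  have hvanish : ((k : ℚ) + 1) * β + (μ (j - k) : ℚ) - (μ j : ℚ) - 1 = 0 := by
    rw [htight, hβ, Nat.cast_add]
    field_simp
    ring
  refine ⟨hkj, htight, hvanish, pieriCoeff_eq_zero_of_numerator_eq_zero (i := j - k)
    (Finset.mem_Icc.mpr ⟨by omega, by omega⟩) ?_⟩
  rw [Nat.cast_sub hkj.le, ← hvanish]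
  ring

/-- If μ is (k,r,n)-admissible, λ is obtained from μ by adding one
node in row j, and λ is not (k,r,n)-admissible, then j > k, μ_{j-k} = μ_j + r,
the factor (k+1)β + μ_{j-k} - μ_j - 1 vanishes at β = -(r-1)/(k+1), and hence
the Pieri coefficient ψ'_{λ/μ} vanishes. -/
theorem pieri_coefficient_vanishes (k r n : ℕ) (hk : 1 ≤ k) (hr : 2 ≤ r)
    (hcop : Nat.Coprime (k + 1) (r - 1))
    (β : ℚ) (hβ : β = -((r : ℚ) - 1) / ((k : ℚ) + 1))
    (μ : ℕ → ℕ)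
    (hmono : ∀ i, 1 ≤ i → μ (i + 1) ≤ μ i)
    (hadm : ∀ i, 1 ≤ i → i + k ≤ n → μ (i + k) + r ≤ μ i)
    (j : ℕ) (hj1 : 1 ≤ j) (hjn : j ≤ n)
    (lam : ℕ → ℕ) (hlam : ∀ m, lam m = if m = j then μ j + 1 else μ m)
    (hpart : j = 1 ∨ μ j < μ (j - 1))
    (hnot : ¬ (∀ i, 1 ≤ i → i + k ≤ n → lam (i + k) + r ≤ lam i)) :
    k < j ∧ μ (j - k) = μ j + r ∧
    (((k : ℚ) + 1) * β + (μ (j - k) : ℚ) - (μ j : ℚ) - 1 = 0) ∧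
    (∏ i ∈ Finset.Icc 1 (j - 1),
      ((((j : ℚ) - (i : ℚ) - 1) * β + (μ i : ℚ) - (μ j : ℚ)) /
        (((j : ℚ) - (i : ℚ)) * β + (μ i : ℚ) - (μ j : ℚ) - 1)) *
      ((((j : ℚ) - (i : ℚ) + 1) * β + (μ i : ℚ) - (μ j : ℚ) - 1) /
        (((j : ℚ) - (i : ℚ)) * β + (μ i : ℚ) - (μ j : ℚ)))
      = 0) :=
  pieri_coefficient_vanishes_general k r n hk β hβ μ hadm j lam hlam hnot
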